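/- arXiv:2306.08538 — 2 statements merged into one kernel-verified Lean document; each statement's English description precedes it below -/
import Mathlib

section
/- Using the HoneyBadger recursion with base cases x^0 * r^j = r^j, the dynamic-programming computation defined by P(k, j) = r^(k+j) + (x - r) * sum_{i=0}^{k-1} P(k-i-1, i+j) satisfies P(k, j) = x^k * r^j for all natural numbers k, j. -/
open Finset

/-- The closed form satisfies the recursion: up to the factor `r ^ j` this is the geometric sum
identity `(x - r) * ∑ i ∈ range (k + 1), x ^ (k - i) * r ^ i = x ^ (k + 1) - r ^ (k + 1)`. -/
theorem pow_succ_mul_pow_eq_add_sub_mul_sum {R : Type*} [CommRing R] (x r : R) (k j : ℕ) :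
    x ^ (k + 1) * r ^ j =
      r ^ (k + 1 + j) + (x - r) * ∑ i ∈ range (k + 1), x ^ (k - i) * r ^ (i + j) := by
  have hsum : ∑ i ∈ range (k + 1), x ^ (k - i) * r ^ (i + j) =
      (∑ i ∈ range (k + 1), r ^ i * x ^ (k + 1 - 1 - i)) * r ^ j := by
    rw [sum_mul]
    refine sum_congr rfl fun i _ => ?_
    rw [Nat.add_sub_cancel, pow_add]
    ring
  rw [hsum, pow_add]
  linear_combination r ^ j * geom_sum₂_mul r x (k + 1)

/-- Dynamic-programming computation from the HoneyBadger recursion: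
any `P` with `P 0 j = r^j` and
`P (k+1) j = r^(k+1+j) + (x - r) * ∑_{i=0}^{k} P (k-i) (i+j)`
satisfies `P k j = x^k * r^j`. -/
theorem stmt_4 {R : Type*} [CommRing R] (x r : R) (P : ℕ → ℕ → R)
    (hP0 : ∀ j, P 0 j = r ^ j)
    (hPrec : ∀ k j, P (k + 1) j =
      r ^ (k + 1 + j) + (x - r) * ∑ i ∈ Finset.range (k + 1), P (k - i) (i + j)) :
    ∀ k j, P k j = x ^ k * r ^ j := by
  intro k
  induction k using Nat.strong_induction_on with
  | _ k ih =>
    intro j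
    cases k with
    | zero => simpa using hP0 j
    | succ k =>
      have hsum : ∑ i ∈ range (k + 1), P (k - i) (i + j) =
          ∑ i ∈ range (k + 1), x ^ (k - i) * r ^ (i + j) :=
        sum_congr rfl fun i _ => ih (k - i) (by omega) (i + j)
      rw [hPrec, hsum, pow_succ_mul_pow_eq_add_sub_mul_sum]
end

section
/- Given the scaling identity P'_i = x^i * 2^p for each i from 1 to n (with P'_1 = x * 2^p), the final output y = α_0 * 2^p + sum_{i=1}^{n} α_i * P'_i equals (sum_{i=0}^{n} α_i * x^i) * 2^p; that is, Algorithm 2 outputs the fixed-point encoding of the polynomial evaluated at x. -/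
open Finset

theorem Finset.add_sum_Icc_one_eq_sum_range {M : Type*} [AddCommMonoid M] (f : ℕ → M) (n : ℕ) :
    f 0 + ∑ i ∈ Icc 1 n, f i = ∑ i ∈ range (n + 1), f i := by
  rw [Nat.range_succ_eq_Icc_zero, ← insert_Icc_add_one_left_eq_Icc n.zero_le,
    sum_insert (by simp), zero_add]

/-- Given the scaling identities `P'_i = x^i * 2^p`, the output of Algorithm 2 is
the fixed-point encoding of the polynomial evaluated at `x`. -/
theorem stmt_8 (x : ℝ) (p n : ℕ) (α : ℕ → ℝ) (P' : ℕ → ℝ)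
    (hP' : ∀ i ∈ Finset.Icc 1 n, P' i = x ^ i * 2 ^ p) :
    α 0 * 2 ^ p + ∑ i ∈ Finset.Icc 1 n, α i * P' i =
      (∑ i ∈ Finset.range (n + 1), α i * x ^ i) * 2 ^ p := by
  rw [sum_congr rfl fun i hi => by rw [hP' i hi], sum_mul,
    ← add_sum_Icc_one_eq_sum_range, pow_zero, mul_one]
  simp_rw [mul_assoc]
end
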